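/- Let b > 0, let β ∈ (−1,0), and let f ∈ C²[0,b] (in particular this covers the case f′(0) ≠ 0). Then there exists K > 0 such that for every N ∈ ℕ with N ≥ 1, the modified midpoint quadrature error (with a = 0) satisfies |E_N| ≤ K/N^{2+β}. -/

import Mathlib

open Filter MeasureTheory Set

/-- The modified midpoint quadrature error `E_N` for `∫_a^b x^β f(x) dx`, where the singular
factor `x^β` is integrated exactly on each subinterval and `f` is evaluated at midpoints:
here `h = (b-a)/N` and `x_t = a + t·h`. -/
noncomputable def midpointError (a b β : ℝ) (f : ℝ → ℝ) (N : ℕ) : ℝ :=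
  (∫ x in a..b, x ^ β * f x) -
    ∑ n ∈ Finset.range N,
      ((a + ((n : ℝ) + 1) * ((b - a) / N)) ^ (β + 1) -
          (a + (n : ℝ) * ((b - a) / N)) ^ (β + 1)) / (β + 1) *
        f (a + ((n : ℝ) + 1 / 2) * ((b - a) / N))

/-!
Let `M` bound `|f'|` and `|f''|` on `[0, b]`. On the cell `[nh, (n+1)h]` with midpoint `m`, write
`f x = f m + f' m (x - m) + R x` with `|R x| ≤ M h² / 4`. Since the weight `x^β` is integrated
exactly, the cell error is `f' m ∫ x^β (x - m) + ∫ x^β R`, and the remainder terms add up to at most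
`M h² / 4 · ∫₀ᵇ x^β = O(h²)`. On the first cell the first moment `∫ x^β (x - m)` is `O(h^(2+β))`
directly. On the `n`-th cell, `n ≥ 1`, `∫ (x - m) = 0` lets us replace `x^β` by `x^β - m^β`, and
`x^β` is Lipschitz there with constant `|β| (nh)^(β-1)`; this gives `O(n^(β-1) h^(2+β))`, summable
in `n` because `β - 1 < -1`. Altogether `E_N = O(h^(2+β)) = O(N^(-(2+β)))`.
-/

lemma abs_sub_sub_mul_le_of_hasDerivWithinAt {f f' f'' : ℝ → ℝ} {s : Set ℝ} {M m x : ℝ}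
    (hs : Convex ℝ s) (hf : ∀ y ∈ s, HasDerivWithinAt f (f' y) s y)
    (hf' : ∀ y ∈ s, HasDerivWithinAt f' (f'' y) s y) (hM : ∀ y ∈ s, |f'' y| ≤ M)
    (hm : m ∈ s) (hx : x ∈ s) :
    |f x - f m - f' m * (x - m)| ≤ M * |x - m| ^ 2 := by
  have hseg : uIcc m x ⊆ s := by
    rw [← segment_eq_uIcc]
    exact hs.segment_subset hm hx
  have hM0 : 0 ≤ M := (abs_nonneg _).trans (hM m hm)
  have hderiv : ∀ t ∈ uIcc m x, HasDerivWithinAt (fun t => f t - f m - f' m * (t - m))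
      (f' t - f' m) (uIcc m x) t := fun t ht =>
    ((((hf t (hseg ht)).mono hseg).sub_const (f m)).sub
      (((hasDerivWithinAt_id t _).sub_const m).const_mul (f' m))).congr_deriv (by ring)
  have hbound : ∀ t ∈ uIcc m x, ‖f' t - f' m‖ ≤ M * |x - m| := fun t ht =>
    calc ‖f' t - f' m‖ ≤ M * ‖t - m‖ :=
          hs.norm_image_sub_le_of_norm_hasDerivWithin_le hf' hM hm (hseg ht)
      _ ≤ M * |x - m| := mul_le_mul_of_nonneg_left (abs_sub_left_of_mem_uIcc ht) hM0
  have := (convex_uIcc m x).norm_image_sub_le_of_norm_hasDerivWithin_le hderiv hbound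
    left_mem_uIcc right_mem_uIcc
  simpa [sq, mul_assoc] using this

theorem ContDiffOn.exists_bound_derivWithin_and_taylor {f : ℝ → ℝ} {a b : ℝ} (hab : a < b)
    (hf : ContDiffOn ℝ 2 f (Icc a b)) :
    ∃ M > 0, ∀ m ∈ Icc a b, |derivWithin f (Icc a b) m| ≤ M ∧
      ∀ x ∈ Icc a b, |f x - f m - derivWithin f (Icc a b) m * (x - m)| ≤ M * |x - m| ^ 2 := by
  have hu : UniqueDiffOn ℝ (Icc a b) := uniqueDiffOn_Icc hab
  have hf' : ContDiffOn ℝ 1 (derivWithin f (Icc a b)) (Icc a b) := hf.derivWithin hu (by norm_num)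
  obtain ⟨M₁, hM₁⟩ := isCompact_Icc.exists_bound_of_continuousOn hf'.continuousOn
  obtain ⟨M₂, hM₂⟩ := isCompact_Icc.exists_bound_of_continuousOn
    (hf'.continuousOn_derivWithin hu le_rfl)
  refine ⟨max (max M₁ M₂) 1, by positivity, fun m hm => ⟨?_, fun x hx => ?_⟩⟩
  · exact (hM₁ m hm).trans (le_max_of_le_left (le_max_left _ _))
  refine abs_sub_sub_mul_le_of_hasDerivWithinAt (convex_Icc a b) (fun y hy => ?_)
    (fun y hy => ?_) (fun y hy => (hM₂ y hy).trans (le_max_of_le_left (le_max_right _ _))) hm hx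
  · exact (hf.differentiableOn (by norm_num) y hy).hasDerivWithinAt
  · exact (hf'.differentiableOn one_ne_zero y hy).hasDerivWithinAt

lemma abs_integral_mul_le_of_abs_le {w R : ℝ → ℝ} {u v C : ℝ} (huv : u ≤ v)
    (hw : IntervalIntegrable w volume u v) (hw0 : ∀ x ∈ Icc u v, 0 ≤ w x)
    (hR : ∀ x ∈ Icc u v, |R x| ≤ C) :
    |∫ x in u..v, w x * R x| ≤ C * ∫ x in u..v, w x := by
  rw [← intervalIntegral.integral_const_mul, ← Real.norm_eq_abs]
  refine intervalIntegral.norm_integral_le_of_norm_le huv (ae_of_all _ fun x hx => ?_)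
    (hw.const_mul C)
  have hx' := Ioc_subset_Icc_self hx
  rw [Real.norm_eq_abs, abs_mul, abs_of_nonneg (hw0 x hx'), mul_comm C]
  exact mul_le_mul_of_nonneg_left (hR x hx') (hw0 x hx')

lemma abs_integral_mul_sub_integral_mul_le {w f : ℝ → ℝ} {u v m d C : ℝ} (huv : u ≤ v)
    (hw : IntervalIntegrable w volume u v) (hw0 : ∀ x ∈ Icc u v, 0 ≤ w x)
    (hf : ContinuousOn f (Icc u v)) (hR : ∀ x ∈ Icc u v, |f x - f m - d * (x - m)| ≤ C) :
    |(∫ x in u..v, w x * f x) - (∫ x in u..v, w x) * f m| ≤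
      |d| * |∫ x in u..v, w x * (x - m)| + C * ∫ x in u..v, w x := by
  have iwf : IntervalIntegrable (fun x => w x * f x) volume u v :=
    hw.mul_continuousOn (by rwa [uIcc_of_le huv])
  have iwx : IntervalIntegrable (fun x => w x * (x - m)) volume u v :=
    hw.mul_continuousOn (by fun_prop)
  have hsplit : ∫ x in u..v, w x * (f x - f m - d * (x - m)) =
      (∫ x in u..v, w x * f x) - (∫ x in u..v, w x) * f m - d * ∫ x in u..v, w x * (x - m) := by
    rw [← intervalIntegral.integral_mul_const, ← intervalIntegral.integral_const_mul,
      ← intervalIntegral.integral_sub iwf (hw.mul_const _),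
      ← intervalIntegral.integral_sub (iwf.sub (hw.mul_const _)) (iwx.const_mul d)]
    exact intervalIntegral.integral_congr fun x _ => by ring
  calc |(∫ x in u..v, w x * f x) - (∫ x in u..v, w x) * f m|
      ≤ |d * (∫ x in u..v, w x * (x - m))| +
          |∫ x in u..v, w x * (f x - f m - d * (x - m))| := by
        refine (abs_add_le _ _).trans_eq' ?_
        rw [hsplit]
        congr 1
        ring
    _ ≤ |d| * |∫ x in u..v, w x * (x - m)| + C * ∫ x in u..v, w x := by
        rw [abs_mul]
        exact add_le_add_right (abs_integral_mul_le_of_abs_le huv hw hw0 hR) _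

lemma abs_integral_mul_sub_midpoint_le {w : ℝ → ℝ} {u v L : ℝ} (huv : u ≤ v) (hL0 : 0 ≤ L)
    (hw : IntervalIntegrable w volume u v)
    (hL : ∀ x ∈ Icc u v, |w x - w ((u + v) / 2)| ≤ L * |x - (u + v) / 2|) :
    |∫ x in u..v, w x * (x - (u + v) / 2)| ≤ L * (v - u) ^ 3 / 4 := by
  set m := (u + v) / 2 with hm
  have hmoment : ∫ x in u..v, (x - m) = 0 := by
    simp [intervalIntegral.integral_sub, hm]; ring
  have hcentre : ∫ x in u..v, w x * (x - m) = ∫ x in u..v, (w x - w m) * (x - m) := by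
    have iwx : IntervalIntegrable (fun x => w x * (x - m)) volume u v :=
      hw.mul_continuousOn (by fun_prop)
    have iconst : IntervalIntegrable (fun x => w m * (x - m)) volume u v := by
      apply Continuous.intervalIntegrable; fun_prop
    rw [show (fun x => (w x - w m) * (x - m)) = fun x => w x * (x - m) - w m * (x - m) by
      ext; ring, intervalIntegral.integral_sub iwx iconst, intervalIntegral.integral_const_mul,
      hmoment, mul_zero, sub_zero]
  have hpt : ∀ x ∈ uIoc u v, ‖(w x - w m) * (x - m)‖ ≤ L * ((v - u) / 2) ^ 2 := by
    intro x hx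
    rw [uIoc_of_le huv] at hx
    have hx' := Ioc_subset_Icc_self hx
    have hdist : |x - m| ≤ (v - u) / 2 := abs_le.mpr ⟨by linarith [hx.1], by linarith [hx.2]⟩
    rw [Real.norm_eq_abs, abs_mul]
    calc |w x - w m| * |x - m| ≤ L * |x - m| * |x - m| :=
          mul_le_mul_of_nonneg_right (hL x hx') (abs_nonneg _)
      _ = L * |x - m| ^ 2 := by ring
      _ ≤ L * ((v - u) / 2) ^ 2 :=
          mul_le_mul_of_nonneg_left (pow_le_pow_left₀ (abs_nonneg _) hdist 2) hL0
  rw [hcentre]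
  refine (intervalIntegral.norm_integral_le_of_norm_le_const hpt).trans_eq ?_
  rw [abs_of_nonneg (sub_nonneg.mpr huv)]
  ring

lemma abs_rpow_sub_rpow_le {β u x y : ℝ} (hβ : β ≤ 1) (hu : 0 < u) (hx : u ≤ x) (hy : u ≤ y) :
    |x ^ β - y ^ β| ≤ |β| * u ^ (β - 1) * |x - y| := by
  have hderiv :
      ∀ t ∈ Ici u, HasDerivWithinAt (fun t : ℝ => t ^ β) (β * t ^ (β - 1)) (Ici u) t :=
    fun t ht => (Real.hasDerivAt_rpow_const (Or.inl (hu.trans_le ht).ne')).hasDerivWithinAt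
  have hbound : ∀ t ∈ Ici u, ‖β * t ^ (β - 1)‖ ≤ |β| * u ^ (β - 1) := fun t ht => by
    rw [Real.norm_eq_abs, abs_mul, abs_of_nonneg (Real.rpow_nonneg (hu.le.trans ht) _)]
    exact mul_le_mul_of_nonneg_left (Real.rpow_le_rpow_of_nonpos hu ht (by linarith))
      (abs_nonneg β)
  simpa using (convex_Ici u).norm_image_sub_le_of_norm_hasDerivWithin_le hderiv hbound hy hx

noncomputable def firstMomentCoeff (β : ℝ) (n : ℕ) : ℝ :=
  if n = 0 then 1 / (2 * (β + 1)) else |β| * (n : ℝ) ^ (β - 1) / 4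

lemma firstMomentCoeff_nonneg {β : ℝ} (hβ : -1 < β) (n : ℕ) : 0 ≤ firstMomentCoeff β n := by
  have : 0 < β + 1 := by linarith
  unfold firstMomentCoeff
  split_ifs <;> positivity

lemma summable_firstMomentCoeff {β : ℝ} (hβ : β < 0) : Summable (firstMomentCoeff β) := by
  refine ((Real.summable_nat_rpow.mpr (by linarith : β - 1 < -1)).mul_left (|β| / 4)
    ).congr_cofinite ?_
  filter_upwards [Filter.eventually_cofinite_ne 0] with n hn
  rw [firstMomentCoeff, if_neg hn]
  ring

lemma abs_integral_rpow_mul_sub_midpoint_le {β h : ℝ} (hβ : -1 < β) (hβ1 : β ≤ 1) (hh : 0 < h)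
    (n : ℕ) :
    |∫ x in n * h..(n + 1) * h, x ^ β * (x - (n + 1 / 2) * h)| ≤
      firstMomentCoeff β n * h ^ (2 + β) := by
  have hw : IntervalIntegrable (fun x : ℝ => x ^ β) volume (n * h) ((n + 1) * h) :=
    intervalIntegral.intervalIntegrable_rpow' hβ
  rcases eq_or_ne n 0 with rfl | hn
  · simp only [Nat.cast_zero, zero_mul, zero_add, one_mul] at hw ⊢
    have hdist : ∀ x ∈ Icc 0 h, |x - 1 / 2 * h| ≤ h / 2 :=
      fun x hx => abs_le.mpr ⟨by linarith [hx.1], by linarith [hx.2]⟩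
    refine (abs_integral_mul_le_of_abs_le hh.le hw (fun x hx => Real.rpow_nonneg hx.1 _)
      hdist).trans_eq ?_
    have hβ0 : β + 1 ≠ 0 := by linarith
    rw [firstMomentCoeff, if_pos rfl, integral_rpow (Or.inl hβ), Real.zero_rpow hβ0, sub_zero,
      show 2 + β = β + 1 + 1 by ring, Real.rpow_add_one hh.ne' (β + 1)]
    field_simp
  · have hn1 : (1 : ℝ) ≤ n := Nat.one_le_cast.mpr (Nat.one_le_iff_ne_zero.mpr hn)
    have hnh : 0 < (n : ℝ) * h := by positivity
    rw [show ((n : ℝ) + 1 / 2) * h = (n * h + (n + 1) * h) / 2 by ring]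
    refine (abs_integral_mul_sub_midpoint_le (by nlinarith) (by positivity) hw
      (fun x hx => abs_rpow_sub_rpow_le hβ1 hnh hx.1 (by nlinarith))).trans_eq ?_
    rw [firstMomentCoeff, if_neg hn, Real.mul_rpow (Nat.cast_nonneg n) hh.le,
      show 2 + β = (β - 1) + (3 : ℕ) by push_cast; ring, Real.rpow_add hh, Real.rpow_natCast]
    ring

lemma sum_integral_uniform_partition {g : ℝ → ℝ} {b : ℝ} (hb : 0 ≤ b) {N : ℕ} (hN : N ≠ 0)
    (hg : IntervalIntegrable g volume 0 b) :
    ∑ n ∈ Finset.range N, ∫ x in n * (b / N)..(n + 1) * (b / N), g x = ∫ x in 0..b, g x := by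
  have hnode : ∀ k ≤ N, (k : ℝ) * (b / N) ∈ uIcc 0 b := fun k hk => by
    rw [uIcc_of_le hb]
    refine ⟨by positivity, ?_⟩
    calc (k : ℝ) * (b / N) ≤ N * (b / N) := by gcongr
      _ = b := by field_simp
  have := intervalIntegral.sum_integral_adjacent_intervals
    (a := fun k : ℕ => (k : ℝ) * (b / N))
    (fun k hk => hg.mono_set (uIcc_subset_uIcc (hnode k hk.le) (hnode (k + 1) hk)))
  simpa [mul_div_cancel₀ b (Nat.cast_ne_zero.mpr hN)] using this

lemma midpointError_zero_eq_sum {b β : ℝ} {f : ℝ → ℝ} (hb : 0 ≤ b) (hβ : -1 < β)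
    (hf : ContinuousOn f (Icc 0 b)) {N : ℕ} (hN : N ≠ 0) :
    midpointError 0 b β f N = ∑ n ∈ Finset.range N,
      ((∫ x in n * (b / N)..(n + 1) * (b / N), x ^ β * f x) -
        (∫ x in n * (b / N)..(n + 1) * (b / N), x ^ β) * f ((n + 1 / 2) * (b / N))) := by
  have hint : IntervalIntegrable (fun x => x ^ β * f x) volume 0 b :=
    (intervalIntegral.intervalIntegrable_rpow' hβ).mul_continuousOn (by rwa [uIcc_of_le hb])
  rw [midpointError, ← sum_integral_uniform_partition hb hN hint, ← Finset.sum_sub_distrib]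
  refine Finset.sum_congr rfl fun n _ => ?_
  rw [integral_rpow (Or.inl hβ)]
  simp only [zero_add, sub_zero]

lemma abs_midpoint_cell_error_le {f d : ℝ → ℝ} {b β h M : ℝ} (hβ : -1 < β) (hβ1 : β ≤ 1)
    (hh : 0 < h) (hf : ContinuousOn f (Icc 0 b)) (hM : ∀ m ∈ Icc 0 b, |d m| ≤ M ∧
      ∀ x ∈ Icc 0 b, |f x - f m - d m * (x - m)| ≤ M * |x - m| ^ 2)
    {n : ℕ} (hn : (n + 1) * h ≤ b) :
    |(∫ x in n * h..(n + 1) * h, x ^ β * f x) -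
        (∫ x in n * h..(n + 1) * h, x ^ β) * f ((n + 1 / 2) * h)| ≤
      M * (firstMomentCoeff β n * h ^ (2 + β) +
        (h / 2) ^ 2 * ∫ x in n * h..(n + 1) * h, x ^ β) := by
  have hcell : Icc (n * h) ((n + 1) * h) ⊆ Icc 0 b := Icc_subset_Icc (by positivity) hn
  have hmid : ((n : ℝ) + 1 / 2) * h ∈ Icc (n * h) ((n + 1) * h) := ⟨by linarith, by linarith⟩
  obtain ⟨hd, htaylor⟩ := hM _ (hcell hmid)
  have hM0 : 0 ≤ M := (abs_nonneg _).trans hd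
  have hR : ∀ x ∈ Icc (n * h) ((n + 1) * h),
      |f x - f ((n + 1 / 2) * h) - d ((n + 1 / 2) * h) * (x - (n + 1 / 2) * h)| ≤
        M * (h / 2) ^ 2 := fun x hx => by
    refine (htaylor x (hcell hx)).trans (mul_le_mul_of_nonneg_left ?_ hM0)
    exact pow_le_pow_left₀ (abs_nonneg _)
      (abs_le.mpr ⟨by linarith [hx.1], by linarith [hx.2]⟩) 2
  have hw0 : ∀ x ∈ Icc (n * h) ((n + 1) * h), 0 ≤ x ^ β := fun x hx =>
    Real.rpow_nonneg ((by positivity : (0 : ℝ) ≤ n * h).trans hx.1) _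
  refine (abs_integral_mul_sub_integral_mul_le (by linarith)
    (intervalIntegral.intervalIntegrable_rpow' hβ) hw0 (hf.mono hcell) hR).trans ?_
  rw [mul_add, ← mul_assoc M ((h / 2) ^ 2)]
  exact add_le_add_left (mul_le_mul hd (abs_integral_rpow_mul_sub_midpoint_le hβ hβ1 hh n)
    (abs_nonneg _) hM0) _

lemma abs_midpointError_zero_le {f d : ℝ → ℝ} {b β M : ℝ} (hb : 0 < b) (hβ : -1 < β)
    (hβ0 : β < 0) (hf : ContinuousOn f (Icc 0 b)) (hM : ∀ m ∈ Icc 0 b, |d m| ≤ M ∧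
      ∀ x ∈ Icc 0 b, |f x - f m - d m * (x - m)| ≤ M * |x - m| ^ 2)
    {N : ℕ} (hN : N ≠ 0) :
    |midpointError 0 b β f N| ≤
      M * ((∑' n, firstMomentCoeff β n) * (b / N) ^ (2 + β) +
        (b / N / 2) ^ 2 * (b ^ (β + 1) / (β + 1))) := by
  have hM0 : 0 ≤ M := (abs_nonneg _).trans (hM 0 ⟨le_rfl, hb.le⟩).1
  set h := b / N with hh_def
  have hh : 0 < h := by positivity
  have hcell : ∀ n ∈ Finset.range N, ((n : ℝ) + 1) * h ≤ b := fun n hn => by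
    have : (n : ℝ) + 1 ≤ N := by exact_mod_cast Finset.mem_range.mp hn
    calc ((n : ℝ) + 1) * h ≤ N * h := by gcongr
      _ = b := by rw [hh_def]; field_simp
  have hsum_weight : ∑ n ∈ Finset.range N, ∫ x in n * h..(n + 1) * h, x ^ β =
      b ^ (β + 1) / (β + 1) := by
    rw [sum_integral_uniform_partition hb.le hN (intervalIntegral.intervalIntegrable_rpow' hβ),
      integral_rpow (Or.inl hβ), Real.zero_rpow (by linarith), sub_zero]
  have hsum_coeff : ∑ n ∈ Finset.range N, firstMomentCoeff β n ≤ ∑' n, firstMomentCoeff β n :=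
    (summable_firstMomentCoeff hβ0).sum_le_tsum _ fun n _ => firstMomentCoeff_nonneg hβ n
  rw [midpointError_zero_eq_sum hb.le hβ hf hN]
  calc _ ≤ ∑ n ∈ Finset.range N, |(∫ x in n * h..(n + 1) * h, x ^ β * f x) -
          (∫ x in n * h..(n + 1) * h, x ^ β) * f ((n + 1 / 2) * h)| :=
        Finset.abs_sum_le_sum_abs _ _
    _ ≤ ∑ n ∈ Finset.range N, M * (firstMomentCoeff β n * h ^ (2 + β) +
          (h / 2) ^ 2 * ∫ x in n * h..(n + 1) * h, x ^ β) :=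
        Finset.sum_le_sum fun n hn =>
          abs_midpoint_cell_error_le hβ (by linarith) hh hf hM (hcell n hn)
    _ ≤ _ := by
        rw [← Finset.mul_sum, Finset.sum_add_distrib, ← Finset.sum_mul, ← Finset.mul_sum,
          hsum_weight]
        gcongr

theorem stmt6 (b β : ℝ) (hb : 0 < b) (hβ : β ∈ Set.Ioo (-1 : ℝ) 0)
    (f : ℝ → ℝ) (hf : ContDiffOn ℝ 2 f (Set.Icc 0 b)) :
    ∃ K : ℝ, 0 < K ∧ ∀ N : ℕ, 1 ≤ N →
      |midpointError 0 b β f N| ≤ K / (N : ℝ) ^ (2 + β) := by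
  obtain ⟨hβl, hβu⟩ := hβ
  obtain ⟨M, hM0, hM⟩ := hf.exists_bound_derivWithin_and_taylor hb
  set A := ∑' n, firstMomentCoeff β n
  set I := b ^ (β + 1) / (β + 1)
  have hA : 0 ≤ A := tsum_nonneg (firstMomentCoeff_nonneg hβl)
  have hI : 0 < I := div_pos (Real.rpow_pos_of_pos hb _) (by linarith)
  refine ⟨M * (b ^ (2 + β) * A + b ^ 2 / 4 * I), by positivity, fun N hN => ?_⟩
  have hN1 : (1 : ℝ) ≤ N := Nat.one_le_cast.mpr hN
  have hNpow : (N : ℝ) ^ (2 + β) ≤ (N : ℝ) ^ 2 := by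
    simpa using Real.rpow_le_rpow_of_exponent_le hN1 (by push_cast; linarith : 2 + β ≤ (2 : ℕ))
  calc _ ≤ M * (A * (b / N) ^ (2 + β) + (b / N / 2) ^ 2 * I) :=
        abs_midpointError_zero_le hb hβl hβu hf.continuousOn hM (Nat.one_le_iff_ne_zero.mp hN)
    _ = M * (b ^ (2 + β) * A / N ^ (2 + β) + b ^ 2 / 4 * I / N ^ 2) := by
        rw [Real.div_rpow hb.le (Nat.cast_nonneg N)]
        ring
    _ ≤ M * (b ^ (2 + β) * A / N ^ (2 + β) + b ^ 2 / 4 * I / N ^ (2 + β)) := by gcongr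
    _ = M * (b ^ (2 + β) * A + b ^ 2 / 4 * I) / N ^ (2 + β) := by ring
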